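/- arXiv:1305.2862 — 3 statements merged into one kernel-verified Lean document; each statement's English description precedes it below -/
import Mathlib

section
/- Let (V, ⟨·,·⟩) be a real inner product space, X ∈ V with ‖X‖ < 1, F(y) = (√⟨y,y⟩ + ⟨X,y⟩)²/√⟨y,y⟩, and let Y, U ∈ V be orthonormal (⟨Y,Y⟩ = ⟨U,U⟩ = 1, ⟨Y,U⟩ = 0). Then g_Y(Y,Y)·g_Y(U,U) − g_Y(Y,U)² = (1 + ⟨X,Y⟩)⁶ (2⟨X,U⟩² − ⟨X,Y⟩² + 1). -/
noncomputable def Fab {V : Type*} [NormedAddCommGroup V] [InnerProductSpace ℝ V]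
    (X : V) (y : V) : ℝ :=
  (Real.sqrt (inner ℝ y y) + (inner ℝ X y : ℝ))^2 / Real.sqrt (inner ℝ y y)

noncomputable def gfun {V : Type*} [NormedAddCommGroup V] [InnerProductSpace ℝ V]
    (F : V → ℝ) (Y U W : V) : ℝ :=
  (deriv (fun s : ℝ => deriv (fun t : ℝ => (F (Y + s • U + t • W))^2) 0) 0) / 2

/-!
`F = Fab X` is positively homogeneous of degree one, so along `s ↦ (1 + s) • Y` the function
`F²` only rescales; hence `g_Y(Y,Y) = F(Y)²` and `g_Y(Y,U) = h'(0)/2`, while `g_Y(U,U) = h''(0)/2`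
holds for every `F`, where `h(t) = F(Y + tU)²`. For orthonormal `Y, U`, `b₀ = ⟨X,Y⟩` and
`b₁ = ⟨X,U⟩`, `h(t) = (√(1 + t²) + b₀ + t b₁)⁴ / (1 + t²)`, which gives `g_Y(Y,Y) = (1 + b₀)⁴`,
`g_Y(Y,U) = 2 (1 + b₀)³ b₁` and `g_Y(U,U) = (1 + b₀)² (6 b₁² + 1 - b₀²)`.
-/

open Filter Topology

section Fundamental

variable {V : Type*} [NormedAddCommGroup V] [InnerProductSpace ℝ V]

theorem gfun_diag (F : V → ℝ) (Y U : V) :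
    gfun F Y U U = deriv (deriv fun t : ℝ => F (Y + t • U) ^ 2) 0 / 2 := by
  have hshift : (fun s : ℝ => deriv (fun t : ℝ => F (Y + s • U + t • U) ^ 2) 0) =
      deriv fun t : ℝ => F (Y + t • U) ^ 2 := by
    funext s
    simpa [add_assoc, ← add_smul] using
      deriv_comp_const_add (fun t : ℝ => F (Y + t • U) ^ 2) s 0
  rw [gfun, hshift]

theorem gfun_self_left_of_homogeneous (F : V → ℝ)
    (hF : ∀ {c : ℝ}, 0 < c → ∀ y, F (c • y) = c * F y) (Y U : V) :
    gfun F Y Y U = deriv (fun t : ℝ => F (Y + t • U) ^ 2) 0 / 2 := by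
  have hinner : (fun s : ℝ => deriv (fun t : ℝ => F (Y + s • Y + t • U) ^ 2) 0)
      =ᶠ[𝓝 0] fun s => (1 + s) * deriv (fun t : ℝ => F (Y + t • U) ^ 2) 0 := by
    filter_upwards [eventually_gt_nhds (neg_one_lt_zero : (-1 : ℝ) < 0)] with s hs
    have hs' : 0 < 1 + s := by linarith
    have hscale : (fun t : ℝ => F (Y + s • Y + t • U) ^ 2) =
        fun t => (1 + s) ^ 2 * F (Y + ((1 + s)⁻¹ * t) • U) ^ 2 := by
      funext t
      have hy : Y + s • Y + t • U = (1 + s) • (Y + ((1 + s)⁻¹ * t) • U) := by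
        rw [smul_add, smul_smul, mul_inv_cancel_left₀ hs'.ne', add_smul, one_smul]
      rw [hy, hF hs', mul_pow]
    rw [hscale, deriv_const_mul_field,
      deriv_comp_mul_left _ (fun t : ℝ => F (Y + t • U) ^ 2), mul_zero, smul_eq_mul]
    field_simp
  rw [gfun, hinner.deriv_eq, deriv_mul_const_field, deriv_const_add, deriv_id'', one_mul]

theorem gfun_self_of_homogeneous (F : V → ℝ)
    (hF : ∀ {c : ℝ}, 0 < c → ∀ y, F (c • y) = c * F y) (Y : V) :
    gfun F Y Y Y = F Y ^ 2 := by
  have hline : (fun t : ℝ => F (Y + t • Y) ^ 2) =ᶠ[𝓝 0] fun t => (1 + t) ^ 2 * F Y ^ 2 := by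
    filter_upwards [eventually_gt_nhds (neg_one_lt_zero : (-1 : ℝ) < 0)] with t ht
    rw [show Y + t • Y = (1 + t) • Y by module, hF (by linarith), mul_pow]
  have hsq : HasDerivAt (fun t : ℝ => (1 + t) ^ 2 * F Y ^ 2) (2 * F Y ^ 2) 0 := by
    simpa using (((hasDerivAt_id (0 : ℝ)).const_add 1).pow 2).mul_const (F Y ^ 2)
  rw [gfun_self_left_of_homogeneous F hF, hline.deriv_eq, hsq.deriv]
  ring

theorem Fab_smul_of_pos (X : V) {c : ℝ} (hc : 0 < c) (y : V) : Fab X (c • y) = c * Fab X y := by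
  have hsqrt : √(inner ℝ (c • y) (c • y) : ℝ) = c * √(inner ℝ y y : ℝ) := by
    rw [real_inner_smul_left, real_inner_smul_right, ← mul_assoc, Real.sqrt_mul (by positivity),
      Real.sqrt_mul_self hc.le]
  rw [Fab, Fab, hsqrt, real_inner_smul_right, ← mul_add, mul_pow, sq c, mul_assoc,
    mul_div_mul_left _ _ hc.ne', mul_div_assoc]

theorem Fab_sq (X y : V) :
    Fab X y ^ 2 = (√(inner ℝ y y : ℝ) + inner ℝ X y) ^ 4 / inner ℝ y y := by
  rw [Fab, div_pow, ← pow_mul, Real.sq_sqrt real_inner_self_nonneg]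

noncomputable def fabSqLine (b₀ b₁ t : ℝ) : ℝ :=
  (√(1 + t ^ 2) + (b₀ + t * b₁)) ^ 4 / (1 + t ^ 2)

theorem Fab_sq_add_smul (X : V) {Y U : V} (hY : (inner ℝ Y Y : ℝ) = 1)
    (hU : (inner ℝ U U : ℝ) = 1) (hYU : (inner ℝ Y U : ℝ) = 0) (t : ℝ) :
    Fab X (Y + t • U) ^ 2 = fabSqLine (inner ℝ X Y) (inner ℝ X U) t := by
  have hnorm : (inner ℝ (Y + t • U) (Y + t • U) : ℝ) = 1 + t ^ 2 := by
    rw [real_inner_add_add_self, real_inner_smul_right, real_inner_smul_left,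
      real_inner_smul_right, hY, hU, hYU]
    ring
  rw [Fab_sq, hnorm, inner_add_right, real_inner_smul_right, fabSqLine]

end Fundamental

theorem hasDerivAt_sqrt_one_add_sq (t : ℝ) :
    HasDerivAt (fun t : ℝ => √(1 + t ^ 2)) (t / √(1 + t ^ 2)) t := by
  have hq : HasDerivAt (fun t : ℝ => 1 + t ^ 2) (2 * t) t := by
    simpa using (hasDerivAt_pow 2 t).const_add 1
  refine ((Real.hasDerivAt_sqrt (by positivity)).comp t hq).congr_deriv ?_
  have : √(1 + t ^ 2) ≠ 0 := by positivity
  field_simp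

theorem hasDerivAt_fabSqLine (b₀ b₁ t : ℝ) :
    HasDerivAt (fabSqLine b₀ b₁)
      ((4 * (√(1 + t ^ 2) + (b₀ + t * b₁)) ^ 3 * (t / √(1 + t ^ 2) + b₁) * (1 + t ^ 2)
        - (√(1 + t ^ 2) + (b₀ + t * b₁)) ^ 4 * (2 * t)) / (1 + t ^ 2) ^ 2) t := by
  have hq : HasDerivAt (fun t : ℝ => 1 + t ^ 2) (2 * t) t := by
    simpa using (hasDerivAt_pow 2 t).const_add 1
  have hp : HasDerivAt (fun t : ℝ => √(1 + t ^ 2) + (b₀ + t * b₁)) (t / √(1 + t ^ 2) + b₁) t := by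
    simpa using
      (hasDerivAt_sqrt_one_add_sq t).fun_add (((hasDerivAt_id t).mul_const b₁).const_add b₀)
  exact ((hp.fun_pow 4).fun_div hq (by positivity)).congr_deriv (by norm_num)

theorem deriv_fabSqLine_zero (b₀ b₁ : ℝ) : deriv (fabSqLine b₀ b₁) 0 = 4 * (1 + b₀) ^ 3 * b₁ := by
  rw [(hasDerivAt_fabSqLine b₀ b₁ 0).deriv]
  norm_num

theorem deriv_deriv_fabSqLine_zero (b₀ b₁ : ℝ) :
    deriv (deriv (fabSqLine b₀ b₁)) 0 =
      12 * (1 + b₀) ^ 2 * b₁ ^ 2 + 4 * (1 + b₀) ^ 3 - 2 * (1 + b₀) ^ 4 := by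
  rw [funext fun t => (hasDerivAt_fabSqLine b₀ b₁ t).deriv]
  have hr : HasDerivAt (fun t : ℝ => √(1 + t ^ 2)) 0 0 := by
    simpa using hasDerivAt_sqrt_one_add_sq 0
  have hq : HasDerivAt (fun t : ℝ => 1 + t ^ 2) 0 0 := by
    simpa using (hasDerivAt_pow 2 (0 : ℝ)).const_add 1
  have hp : HasDerivAt (fun t : ℝ => √(1 + t ^ 2) + (b₀ + t * b₁)) b₁ 0 := by
    simpa using hr.fun_add (((hasDerivAt_id (0 : ℝ)).mul_const b₁).const_add b₀)
  have hp' : HasDerivAt (fun t : ℝ => t / √(1 + t ^ 2) + b₁) 1 0 := by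
    simpa using ((hasDerivAt_id (0 : ℝ)).fun_div hr (by norm_num)).add_const b₁
  have h2t : HasDerivAt (fun t : ℝ => 2 * t) 2 0 := by
    simpa using (hasDerivAt_id (0 : ℝ)).const_mul 2
  have hnum :=
    ((((hp.fun_pow 3).const_mul 4).fun_mul hp').fun_mul hq).fun_sub ((hp.fun_pow 4).fun_mul h2t)
  rw [(hnum.fun_div (hq.fun_pow 2) (by norm_num)).deriv]
  norm_num
  ring

theorem stmt_3_general (V : Type*) [NormedAddCommGroup V] [InnerProductSpace ℝ V]
    (X : V) (Y U : V)
    (hY : (inner ℝ Y Y : ℝ) = 1) (hU : (inner ℝ U U : ℝ) = 1) (hYU : (inner ℝ Y U : ℝ) = 0) :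
    gfun (Fab X) Y Y Y * gfun (Fab X) Y U U - (gfun (Fab X) Y Y U)^2 =
      (1 + (inner ℝ X Y : ℝ))^6 * (2 * (inner ℝ X U : ℝ)^2 - (inner ℝ X Y : ℝ)^2 + 1) := by
  have hline : (fun t : ℝ => Fab X (Y + t • U) ^ 2) = fabSqLine (inner ℝ X Y) (inner ℝ X U) :=
    funext (Fab_sq_add_smul X hY hU hYU)
  have hFY : Fab X Y ^ 2 = (1 + inner ℝ X Y) ^ 4 := by
    simpa [fabSqLine] using Fab_sq_add_smul X hY hU hYU 0
  rw [gfun_self_of_homogeneous _ (Fab_smul_of_pos X),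
    gfun_self_left_of_homogeneous _ (Fab_smul_of_pos X), gfun_diag, hline, hFY,
    deriv_fabSqLine_zero, deriv_deriv_fabSqLine_zero]
  ring

theorem stmt_3 (V : Type*) [NormedAddCommGroup V] [InnerProductSpace ℝ V]
    (X : V) (hX : ‖X‖ < 1) (Y U : V)
    (hY : (inner ℝ Y Y : ℝ) = 1) (hU : (inner ℝ U U : ℝ) = 1) (hYU : (inner ℝ Y U : ℝ) = 0) :
    gfun (Fab X) Y Y Y * gfun (Fab X) Y U U - (gfun (Fab X) Y Y U)^2 =
      (1 + (inner ℝ X Y : ℝ))^6 * (2 * (inner ℝ X U : ℝ)^2 - (inner ℝ X Y : ℝ)^2 + 1) :=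
  stmt_3_general V X Y U hY hU hYU
end

section
/- Let (V, ⟨·,·⟩) be a real inner product space, X ∈ V with ‖X‖ < 1, F(y) = (√⟨y,y⟩ + ⟨X,y⟩)²/√⟨y,y⟩, and let Y, U ∈ V be orthonormal. Let W ∈ V satisfy ⟨W,Y⟩ = 0. Then g_Y(W,U) = (1+⟨X,Y⟩)² ( 2⟨X,U⟩(1−2⟨X,Y⟩)⟨Y,W⟩ + 6⟨X,W⟩⟨X,U⟩ + ⟨W,U⟩(1−⟨X,Y⟩²) ), which since ⟨W,Y⟩=0 reduces to g_Y(W,U) = (1+⟨X,Y⟩)² ( 6⟨X,W⟩⟨X,U⟩ + ⟨W,U⟩(1−⟨X,Y⟩²) ). -/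
private lemma deriv_inner_eq (w m a b c s : ℝ)
    (hpos : ∀ t : ℝ, 0 < 1 + w*s^2 + (2*m*s*t + t^2)) :
    deriv (fun t : ℝ => (Real.sqrt (1 + w*s^2 + (2*m*s*t + t^2)) + (a + b*s + c*t))^4
        / (1 + w*s^2 + (2*m*s*t + t^2))) 0
    = (4*(Real.sqrt (1+w*s^2) + (a+b*s))^3 * (2*m*s/(2*Real.sqrt (1+w*s^2)) + c) * (1+w*s^2)
        - (Real.sqrt (1+w*s^2) + (a+b*s))^4 * (2*m*s)) / (1+w*s^2)^2 := by
  have h0 : (0:ℝ) < 1 + w*s^2 := by have := hpos 0; simpa using this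
  have hq : HasDerivAt (fun t : ℝ => 1 + w*s^2 + (2*m*s*t + t^2)) (2*m*s) 0 := by
    simpa using (((hasDerivAt_id (0:ℝ)).const_mul (2*m*s)).add
      (hasDerivAt_pow 2 (0:ℝ))).const_add (1 + w*s^2)
  have hqne : (1 + w*s^2 + (2*m*s*0 + 0^2)) ≠ 0 := by simpa using h0.ne'
  have hsq := hq.sqrt hqne
  have hp : HasDerivAt (fun t : ℝ => a + b*s + c*t) c 0 := by
    simpa using ((hasDerivAt_id (0:ℝ)).const_mul c).const_add (a + b*s)
  have hdiv := ((hsq.add hp).pow 4).div hq hqne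
  refine hdiv.deriv.trans ?_
  norm_num [Pi.add_apply, Pi.pow_apply, Pi.div_apply, Pi.mul_apply, Pi.sub_apply]

private lemma calc_main (w m a b c : ℝ)
    (hpos : ∀ s t : ℝ, 0 < 1 + w*s^2 + (2*m*s*t + t^2)) :
    deriv (fun s : ℝ => deriv (fun t : ℝ =>
        (Real.sqrt (1 + w*s^2 + (2*m*s*t + t^2)) + (a + b*s + c*t))^4
          / (1 + w*s^2 + (2*m*s*t + t^2))) 0) 0
    = 2*((1+a)^2*(6*b*c + m*(1-a^2))) := by
  have hfun : (fun s : ℝ => deriv (fun t : ℝ =>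
        (Real.sqrt (1 + w*s^2 + (2*m*s*t + t^2)) + (a + b*s + c*t))^4
          / (1 + w*s^2 + (2*m*s*t + t^2))) 0)
      = (fun s : ℝ =>
        (4*(Real.sqrt (1+w*s^2) + (a+b*s))^3 * (2*m*s/(2*Real.sqrt (1+w*s^2)) + c) * (1+w*s^2)
        - (Real.sqrt (1+w*s^2) + (a+b*s))^4 * (2*m*s)) / (1+w*s^2)^2) :=
    funext fun s => deriv_inner_eq w m a b c s (fun t => hpos s t)
  rw [hfun]
  have h0 : (0:ℝ) < 1 + w*0^2 := by have := hpos 0 0; simpa using this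
  have hr : HasDerivAt (fun s : ℝ => 1 + w*s^2) 0 0 := by
    simpa using ((hasDerivAt_pow 2 (0:ℝ)).const_mul w).const_add 1
  have hrne : (1 + w*0^2) ≠ 0 := h0.ne'
  have hsq : HasDerivAt (fun s : ℝ => Real.sqrt (1+w*s^2)) 0 0 := by
    simpa using hr.sqrt hrne
  have hp : HasDerivAt (fun s : ℝ => a + b*s) b 0 := by
    simpa using ((hasDerivAt_id (0:ℝ)).const_mul b).const_add a
  have hsum := hsq.add hp
  have h3 := (hsum.pow 3).const_mul 4
  have hnum1 : HasDerivAt (fun s : ℝ => 2*m*s) (2*m) 0 := by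
    simpa using (hasDerivAt_id (0:ℝ)).const_mul (2*m)
  have hden2 : HasDerivAt (fun s : ℝ => 2*Real.sqrt (1+w*s^2)) 0 0 := by
    simpa using hsq.const_mul 2
  have hd2ne : 2*Real.sqrt (1+w*0^2) ≠ 0 := by
    norm_num
  have hfrac := hnum1.div hden2 hd2ne
  have hlin := hfrac.add_const c
  have hA := (h3.mul hlin).mul hr
  have hB := (hsum.pow 4).mul hnum1
  have hNum := hA.sub hB
  have hDen := hr.pow 2
  have hdne : ((1 + w*0^2)^2) ≠ 0 := pow_ne_zero 2 hrne
  have hD := hNum.div hDen hdne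
  refine hD.deriv.trans ?_
  norm_num [Real.sqrt_one, Pi.add_apply, Pi.pow_apply, Pi.div_apply, Pi.mul_apply, Pi.sub_apply]
  ring

theorem stmt_4 (V : Type*) [NormedAddCommGroup V] [InnerProductSpace ℝ V]
    (X : V) (hX : ‖X‖ < 1) (Y U W : V)
    (hY : (inner ℝ Y Y : ℝ) = 1) (hU : (inner ℝ U U : ℝ) = 1) (hYU : (inner ℝ Y U : ℝ) = 0)
    (hWY : (inner ℝ W Y : ℝ) = 0) :
    gfun (Fab X) Y W U =
      (1 + (inner ℝ X Y : ℝ))^2 *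
        (6 * (inner ℝ X W : ℝ) * (inner ℝ X U : ℝ) +
          (inner ℝ W U : ℝ) * (1 - (inner ℝ X Y : ℝ)^2)) := by
  have hYW : (inner ℝ Y W : ℝ) = 0 := by rw [real_inner_comm]; exact hWY
  have hUY : (inner ℝ U Y : ℝ) = 0 := by rw [real_inner_comm]; exact hYU
  have hpos : ∀ s t : ℝ,
      0 < 1 + (inner ℝ W W : ℝ)*s^2 + (2*(inner ℝ W U : ℝ)*s*t + t^2) := by
    intro s t
    have hz : (inner ℝ (s•W + t•U) (s•W + t•U) : ℝ)
        = (inner ℝ W W : ℝ)*s^2 + (2*(inner ℝ W U : ℝ)*s*t + t^2) := by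
      simp only [inner_add_left, inner_add_right, real_inner_smul_left,
        real_inner_smul_right, hU]
      rw [real_inner_comm U W]; ring
    have h2 := real_inner_self_nonneg (x := s•W + t•U)
    rw [hz] at h2
    linarith
  have hq : ∀ s t : ℝ, (inner ℝ (Y + s•W + t•U) (Y + s•W + t•U) : ℝ)
      = 1 + (inner ℝ W W : ℝ)*s^2 + (2*(inner ℝ W U : ℝ)*s*t + t^2) := by
    intro s t
    simp only [inner_add_left, inner_add_right, real_inner_smul_left,
      real_inner_smul_right, hY, hU, hYU, hWY, hYW, hUY]
    rw [real_inner_comm U W]; ring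
  have hpx : ∀ s t : ℝ, (inner ℝ X (Y + s•W + t•U) : ℝ)
      = (inner ℝ X Y : ℝ) + (inner ℝ X W : ℝ)*s + (inner ℝ X U : ℝ)*t := by
    intro s t
    simp only [inner_add_right, real_inner_smul_right]
    ring
  have hfab : ∀ s t : ℝ, (Fab X (Y + s•W + t•U))^2
      = (Real.sqrt (1 + (inner ℝ W W : ℝ)*s^2 + (2*(inner ℝ W U : ℝ)*s*t + t^2))
          + ((inner ℝ X Y : ℝ) + (inner ℝ X W : ℝ)*s + (inner ℝ X U : ℝ)*t))^4
          / (1 + (inner ℝ W W : ℝ)*s^2 + (2*(inner ℝ W U : ℝ)*s*t + t^2)) := by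
    intro s t
    rw [Fab, hq s t, hpx s t, div_pow, ← pow_mul, Real.sq_sqrt (hpos s t).le]
  have hkey : (fun s : ℝ => deriv (fun t : ℝ => (Fab X (Y + s•W + t•U))^2) 0)
      = (fun s : ℝ => deriv (fun t : ℝ =>
        (Real.sqrt (1 + (inner ℝ W W : ℝ)*s^2 + (2*(inner ℝ W U : ℝ)*s*t + t^2))
          + ((inner ℝ X Y : ℝ) + (inner ℝ X W : ℝ)*s + (inner ℝ X U : ℝ)*t))^4
          / (1 + (inner ℝ W W : ℝ)*s^2 + (2*(inner ℝ W U : ℝ)*s*t + t^2))) 0) := by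
    funext s
    congr 1
    funext t
    exact hfab s t
  rw [gfun, hkey,
    calc_main (inner ℝ W W) (inner ℝ W U) (inner ℝ X Y) (inner ℝ X W) (inner ℝ X U) hpos]
  ring
end

section
/- Let (V, ⟨·,·⟩) be a real inner product space, X ∈ V with ‖X‖ < 1, and F(y) = (√⟨y,y⟩ + ⟨X,y⟩)²/√⟨y,y⟩. Let Y, U be orthonormal in V and W ∈ V with ⟨W,Y⟩ = 0. Then the ratio g_Y(W,U) / (g_Y(Y,Y)g_Y(U,U) − g_Y(Y,U)²) equals ( 6⟨X,W⟩⟨X,U⟩ + ⟨W,U⟩(1−⟨X,Y⟩²) ) / ( (1+⟨X,Y⟩)⁴ (2⟨X,U⟩² − ⟨X,Y⟩² + 1) ). -/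
open Real RealInnerProductSpace Filter Topology

noncomputable def fabSqProfile (q l : ℝ) : ℝ := (√q + l) ^ 4 / q

noncomputable def fabSqProfileDeriv (q l q' l' : ℝ) : ℝ :=
  4 * (√q + l) ^ 3 * (q' / (2 * √q) + l') / q - (√q + l) ^ 4 * q' / q ^ 2

section Profile

variable {Q L Q₁ : ℝ → ℝ} {q' l' q₁' t : ℝ}

theorem HasDerivAt.fabSqProfile (hQ : HasDerivAt Q q' t) (hL : HasDerivAt L l' t)
    (hQt : 0 < Q t) :
    HasDerivAt (fun t => fabSqProfile (Q t) (L t)) (fabSqProfileDeriv (Q t) (L t) q' l') t := by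
  refine ((((hQ.sqrt hQt.ne').add hL).pow 4).fun_div hQ hQt.ne').congr_deriv ?_
  have hSt : √(Q t) ≠ 0 := (sqrt_pos.2 hQt).ne'
  simp only [fabSqProfileDeriv, Pi.add_apply, Pi.pow_apply]
  field_simp
  ring

theorem HasDerivAt.fabSqProfileDeriv (hQ : HasDerivAt Q q' t) (hL : HasDerivAt L l' t)
    (hQ₁ : HasDerivAt Q₁ q₁' t) (hQt : Q t = 1) (m : ℝ) :
    HasDerivAt (fun t => fabSqProfileDeriv (Q t) (L t) (Q₁ t) m)
      (12 * (1 + L t) ^ 2 * (q' / 2 + l') * (Q₁ t / 2 + m)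
        + 4 * (1 + L t) ^ 3 * (q₁' / 2 - Q₁ t * q' / 4)
        - 4 * (1 + L t) ^ 3 * (Q₁ t / 2 + m) * q'
        - 4 * (1 + L t) ^ 3 * (q' / 2 + l') * Q₁ t
        - (1 + L t) ^ 4 * q₁' + 2 * (1 + L t) ^ 4 * Q₁ t * q') t := by
  have hQt' : Q t ≠ 0 := by simp [hQt]
  have hS := hQ.sqrt hQt'
  have hSt : 2 * √(Q t) ≠ 0 := by simp [hQt]
  have hP := hS.add hL
  have h1 := (((hP.pow 3).const_mul 4).mul ((hQ₁.fun_div (hS.const_mul 2) hSt).add_const m)).fun_div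
    hQ hQt'
  have h2 := ((hP.pow 4).mul hQ₁).fun_div (hQ.pow 2) (pow_ne_zero 2 hQt')
  refine (h1.sub h2).congr_deriv ?_
  simp only [Pi.add_apply, Pi.pow_apply, Pi.mul_apply, hQt, sqrt_one]
  ring

end Profile

section Fab

variable {V : Type*} [NormedAddCommGroup V] [InnerProductSpace ℝ V]

theorem sq_Fab (X y : V) : Fab X y ^ 2 = fabSqProfile ⟪y, y⟫ ⟪X, y⟫ := by
  rw [Fab, fabSqProfile, div_pow, ← pow_mul, sq_sqrt real_inner_self_nonneg]

theorem hasDerivAt_add_smul (y B : V) (t : ℝ) : HasDerivAt (fun t : ℝ => y + t • B) B t := by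
  simpa using ((hasDerivAt_id t).smul_const B).const_add y

theorem hasDerivAt_inner_self_add_smul (y B : V) :
    HasDerivAt (fun t : ℝ => ⟪y + t • B, y + t • B⟫) (2 * ⟪y, B⟫) 0 := by
  have hline := hasDerivAt_add_smul y B 0
  simpa [two_mul, real_inner_comm] using hline.inner ℝ hline

theorem hasDerivAt_inner_add_smul (X y B : V) :
    HasDerivAt (fun t : ℝ => ⟪X, y + t • B⟫) ⟪X, B⟫ 0 := by
  simpa using (hasDerivAt_const (0 : ℝ) X).inner ℝ (hasDerivAt_add_smul y B 0)

theorem hasDerivAt_sq_Fab_add_smul (X y B : V) (hy : 0 < ⟪y, y⟫) :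
    HasDerivAt (fun t : ℝ => Fab X (y + t • B) ^ 2)
      (fabSqProfileDeriv ⟪y, y⟫ ⟪X, y⟫ (2 * ⟪y, B⟫) ⟪X, B⟫) 0 := by
  simpa [sq_Fab] using (hasDerivAt_inner_self_add_smul y B).fabSqProfile
    (hasDerivAt_inner_add_smul X y B) (by simpa using hy)

theorem gfun_Fab (X Y A B : V) (hY : ⟪Y, Y⟫ = 1) :
    gfun (Fab X) Y A B = (1 + ⟪X, Y⟫) ^ 2 * (6 * (⟪Y, A⟫ + ⟪X, A⟫) * (⟪Y, B⟫ + ⟪X, B⟫)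
      + 2 * (1 + ⟪X, Y⟫) * (⟪A, B⟫ - ⟪Y, A⟫ * ⟪Y, B⟫)
      - 4 * (1 + ⟪X, Y⟫) * (⟪Y, A⟫ * (⟪Y, B⟫ + ⟪X, B⟫) + ⟪Y, B⟫ * (⟪Y, A⟫ + ⟪X, A⟫))
      + (1 + ⟪X, Y⟫) ^ 2 * (4 * ⟪Y, A⟫ * ⟪Y, B⟫ - ⟪A, B⟫)) := by
  have hQ := hasDerivAt_inner_self_add_smul Y A
  have hQ₁ : HasDerivAt (fun s : ℝ => 2 * ⟪Y + s • A, B⟫) (2 * ⟪A, B⟫) 0 := by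
    simpa using ((hasDerivAt_add_smul Y A 0).inner ℝ (hasDerivAt_const (0 : ℝ) B)).const_mul 2
  have hpos : ∀ᶠ s : ℝ in 𝓝 0, 0 < ⟪Y + s • A, Y + s • A⟫ :=
    continuousAt_const.eventually_lt hQ.continuousAt
      (by rw [zero_smul, add_zero, hY]; exact one_pos)
  -- The t-derivative is needed on a whole neighbourhood of s = 0 to differentiate it in s.
  have hinner : (fun s : ℝ => deriv (fun t : ℝ => Fab X (Y + s • A + t • B) ^ 2) 0) =ᶠ[𝓝 0]
      fun s => fabSqProfileDeriv ⟪Y + s • A, Y + s • A⟫ ⟪X, Y + s • A⟫ (2 * ⟪Y + s • A, B⟫)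
        ⟪X, B⟫ :=
    hpos.mono fun s hs => (hasDerivAt_sq_Fab_add_smul X _ B hs).deriv
  rw [gfun, ((hQ.fabSqProfileDeriv (hasDerivAt_inner_add_smul X Y A) hQ₁ (by simpa using hY)
    ⟪X, B⟫).congr_of_eventuallyEq hinner).deriv]
  simp only [zero_smul, add_zero, ne_eq, OfNat.ofNat_ne_zero, not_false_eq_true,
    mul_div_cancel_left₀]
  ring

end Fab

theorem stmt_5 (V : Type*) [NormedAddCommGroup V] [InnerProductSpace ℝ V]
    (X : V) (hX : ‖X‖ < 1) (Y U W : V)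
    (hY : (inner ℝ Y Y : ℝ) = 1) (hU : (inner ℝ U U : ℝ) = 1) (hYU : (inner ℝ Y U : ℝ) = 0)
    (hWY : (inner ℝ W Y : ℝ) = 0) :
    gfun (Fab X) Y W U /
        (gfun (Fab X) Y Y Y * gfun (Fab X) Y U U - (gfun (Fab X) Y Y U)^2) =
      (6 * (inner ℝ X W : ℝ) * (inner ℝ X U : ℝ) + (inner ℝ W U : ℝ) * (1 - (inner ℝ X Y : ℝ)^2)) /
        ((1 + (inner ℝ X Y : ℝ))^4 * (2 * (inner ℝ X U : ℝ)^2 - (inner ℝ X Y : ℝ)^2 + 1)) := by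
  have hYW : ⟪Y, W⟫ = 0 := by rw [real_inner_comm, hWY]
  have hXY : |⟪X, Y⟫| < 1 :=
    calc |⟪X, Y⟫| ≤ ‖X‖ * ‖Y‖ := abs_real_inner_le_norm X Y
      _ = ‖X‖ := by rw [norm_eq_sqrt_real_inner Y, hY, sqrt_one, mul_one]
      _ < 1 := hX
  obtain ⟨hXY_lower, hXY_upper⟩ := abs_lt.1 hXY
  have hq : 0 < 1 + ⟪X, Y⟫ := by linarith
  have hM : 0 < 2 * ⟪X, U⟫ ^ 2 - ⟪X, Y⟫ ^ 2 + 1 := by nlinarith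
  have hnum : gfun (Fab X) Y W U
      = (1 + ⟪X, Y⟫) ^ 2 * (6 * ⟪X, W⟫ * ⟪X, U⟫ + ⟪W, U⟫ * (1 - ⟪X, Y⟫ ^ 2)) := by
    rw [gfun_Fab X Y W U hY, hYW, hYU]
    ring
  have hden : gfun (Fab X) Y Y Y * gfun (Fab X) Y U U - gfun (Fab X) Y Y U ^ 2
      = (1 + ⟪X, Y⟫) ^ 6 * (2 * ⟪X, U⟫ ^ 2 - ⟪X, Y⟫ ^ 2 + 1) := by
    simp only [gfun_Fab X Y _ _ hY, hY, hU, hYU]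
    ring
  rw [hnum, hden]
  field_simp
end
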